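/- arXiv:1712.03772 — 3 statements merged into one kernel-verified Lean document; each statement's English description precedes it below -/
import Mathlib

section
/- For every x ∈ (0,1): (1−π/3)·x + (1/6−π/18)·x³ + (3/40−5π/216)·x⁵ + (5/112−17π/1296)·x⁷ < arcsin x − πx/(2+√(1−x²)) < (1−π/3)·x + (1/6−π/18)·x³ + (3/40−5π/216)·x⁵ + (−149/120 + 89π/216)·x⁷. -/
/-!
Put `s = √(1 - x²)`. The derivative of `arcsin x - π x / (2 + s)` is
`((2 + s)² - π (1 + 2 s)) / (s (2 + s)²)`, and the derivatives of the odd polynomials are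
polynomials in `x² = 1 - s²`. Hence the derivative of each gap between the function and a bound is
`(1 - s)ᵏ / (s (2 + s)²)` times a polynomial in `s`.

For the lower bound (`k = 4`) that polynomial has positive coefficients, so the lower gap
increases from its value `0` at `x = 0`. For the upper bound (`k = 3`) it is `π - 4` plus a
polynomial with positive coefficients, so it increases with `s`. Since `s` decreases with `x`,
the derivative of the upper gap changes sign at most once, from `+` to `-`, on `(0, 1)`. The upper
gap vanishes at both `0` and `1`, so by the mean value theorem it is positive in between.
-/

open Real Set

theorem pos_on_Ioo_of_hasDerivAt_of_sign_change {f f' : ℝ → ℝ} {a b : ℝ}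
    (hf : ContinuousOn f (Icc a b)) (hff' : ∀ x ∈ Ioo a b, HasDerivAt f (f' x) x)
    (ha : 0 ≤ f a) (hb : 0 ≤ f b)
    (hf' : ∀ x ∈ Ioo a b, ∀ y ∈ Ioo a b, x < y → 0 ≤ f' y → 0 < f' x) :
    ∀ x ∈ Ioo a b, 0 < f x := by
  intro x hx
  by_contra! hfx
  obtain ⟨ξ, hξ, hslope_left⟩ := exists_hasDerivAt_eq_slope f f' hx.1
    (hf.mono (Icc_subset_Icc_right hx.2.le)) fun y hy => hff' y ⟨hy.1, hy.2.trans hx.2⟩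
  obtain ⟨η, hη, hslope_right⟩ := exists_hasDerivAt_eq_slope f f' hx.2
    (hf.mono (Icc_subset_Icc_left hx.1.le)) fun y hy => hff' y ⟨hx.1.trans hy.1, hy.2⟩
  have hξ_nonpos : f' ξ ≤ 0 :=
    hslope_left ▸ div_nonpos_of_nonpos_of_nonneg (by linarith) (by linarith [hx.1])
  have hη_nonneg : 0 ≤ f' η := hslope_right ▸ div_nonneg (by linarith) (by linarith [hx.2])
  exact (hf' ξ ⟨hξ.1, hξ.2.trans hx.2⟩ η ⟨hx.1.trans hη.1, hη.2⟩ (hξ.2.trans hη.1)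
    hη_nonneg).not_ge hξ_nonpos

noncomputable def arcsinSubShafer (x : ℝ) : ℝ := arcsin x - π * x / (2 + √(1 - x ^ 2))

def oddSeptic (a b c d x : ℝ) : ℝ := a * x + b * x ^ 3 + c * x ^ 5 + d * x ^ 7

lemma continuous_arcsinSubShafer : Continuous arcsinSubShafer :=
  continuous_arcsin.sub <| (continuous_const.mul continuous_id).div (by fun_prop)
    fun x => by positivity

lemma arcsinSubShafer_zero : arcsinSubShafer 0 = 0 := by simp [arcsinSubShafer]

lemma arcsinSubShafer_one : arcsinSubShafer 1 = 0 := by simp [arcsinSubShafer]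

lemma continuous_oddSeptic (a b c d : ℝ) : Continuous (oddSeptic a b c d) := by
  unfold oddSeptic; fun_prop

lemma hasDerivAt_oddSeptic (a b c d x : ℝ) :
    HasDerivAt (oddSeptic a b c d)
      (a + 3 * b * x ^ 2 + 5 * c * (x ^ 2) ^ 2 + 7 * d * (x ^ 2) ^ 3) x := by
  refine (((((hasDerivAt_id x).const_mul a).add ((hasDerivAt_pow 3 x).const_mul b)).add
      ((hasDerivAt_pow 5 x).const_mul c)).add ((hasDerivAt_pow 7 x).const_mul d)).congr_deriv ?_
  norm_num
  ring

lemma hasDerivAt_arcsinSubShafer {x : ℝ} (hx : x ∈ Ioo (-1) 1) :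
    HasDerivAt arcsinSubShafer
      (((2 + √(1 - x ^ 2)) ^ 2 - π * (1 + 2 * √(1 - x ^ 2)))
        / (√(1 - x ^ 2) * (2 + √(1 - x ^ 2)) ^ 2)) x := by
  have hq : 0 < 1 - x ^ 2 := by nlinarith [hx.1, hx.2]
  have hs : 0 < √(1 - x ^ 2) := sqrt_pos.mpr hq
  have hsq : √(1 - x ^ 2) ^ 2 = 1 - x ^ 2 := sq_sqrt hq.le
  have hden : HasDerivAt (fun t => 2 + √(1 - t ^ 2)) (-(2 * x) / (2 * √(1 - x ^ 2))) x := by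
    have := ((hasDerivAt_pow 2 x).const_sub 1).sqrt hq.ne'
    simpa using this.const_add 2
  refine ((hasDerivAt_arcsin hx.1.ne' hx.2.ne).sub
    (((hasDerivAt_id' x).const_mul π).div hden (by positivity))).congr_deriv ?_
  field_simp
  linear_combination (-π) * hsq

lemma sqrt_one_sub_sq_mem_Ioo {x : ℝ} (hx : x ∈ Ioo 0 1) : √(1 - x ^ 2) ∈ Ioo 0 1 := by
  have hx2 : x ^ 2 ∈ Ioo 0 1 := ⟨pow_pos hx.1 2, by nlinarith [hx.1, hx.2]⟩
  refine ⟨sqrt_pos.mpr (by linarith [hx2.2]), ?_⟩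
  rw [sqrt_lt' one_pos]
  linarith [hx2.1]

lemma one_sub_pow_div_pos {s : ℝ} (hs : s ∈ Ioo 0 1) (n : ℕ) :
    0 < (1 - s) ^ n / (s * (2 + s) ^ 2) := by
  have := hs.1
  have := sub_pos.2 hs.2
  positivity

noncomputable def lowerFactor (s : ℝ) : ℝ :=
  (4 - π) + (45 / 4 - 1027 * π / 324) * s + (53 / 4 - 1247 * π / 324) * s ^ 2
    + (129 / 16 - 1021 * π / 432) * s ^ 3 + (5 / 2 - 119 * π / 162) * s ^ 4
    + (5 / 16 - 119 * π / 1296) * s ^ 5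

noncomputable def upperFactor (s : ℝ) : ℝ :=
  (π - 4) + (380 * π / 27 - 649 / 15) * s + (1304 * π / 27 - 2191 / 15) * s ^ 2
    + (875 * π / 12 - 2639 / 12) * s ^ 3 + (659 * π / 12 - 9931 / 60) * s ^ 4
    + (4361 * π / 216 - 7301 / 120) * s ^ 5 + (623 * π / 216 - 1043 / 120) * s ^ 6

lemma lowerFactor_pos {s : ℝ} (hs : 0 ≤ s) : 0 < lowerFactor s := by
  have := pi_lt_d2
  unfold lowerFactor
  nlinarith [pow_nonneg hs 2, pow_nonneg hs 3, pow_nonneg hs 4, pow_nonneg hs 5]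

lemma upperFactor_strictMonoOn : StrictMonoOn upperFactor (Ici 0) := by
  intro s (hs : 0 ≤ s) t _ hst
  have := pi_gt_d2
  unfold upperFactor
  gcongr <;> linarith

noncomputable def lowerGap (x : ℝ) : ℝ :=
  arcsinSubShafer x
    - oddSeptic (1 - π / 3) (1 / 6 - π / 18) (3 / 40 - 5 * π / 216) (5 / 112 - 17 * π / 1296) x

noncomputable def upperGap (x : ℝ) : ℝ :=
  oddSeptic (1 - π / 3) (1 / 6 - π / 18) (3 / 40 - 5 * π / 216) (-(149 / 120) + 89 * π / 216) x
    - arcsinSubShafer x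

lemma hasDerivAt_lowerGap {x : ℝ} (hx : x ∈ Ioo (-1) 1) :
    HasDerivAt lowerGap ((1 - √(1 - x ^ 2)) ^ 4 / (√(1 - x ^ 2) * (2 + √(1 - x ^ 2)) ^ 2)
      * lowerFactor √(1 - x ^ 2)) x := by
  refine ((hasDerivAt_arcsinSubShafer hx).sub (hasDerivAt_oddSeptic _ _ _ _ x)).congr_deriv ?_
  have hq : 0 < 1 - x ^ 2 := by nlinarith [hx.1, hx.2]
  have hx2 : x ^ 2 = 1 - √(1 - x ^ 2) ^ 2 := by rw [sq_sqrt hq.le]; ring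
  set s := √(1 - x ^ 2)
  have hs : 0 < s := sqrt_pos.mpr hq
  rw [hx2, lowerFactor]
  field_simp
  ring

lemma hasDerivAt_upperGap {x : ℝ} (hx : x ∈ Ioo (-1) 1) :
    HasDerivAt upperGap ((1 - √(1 - x ^ 2)) ^ 3 / (√(1 - x ^ 2) * (2 + √(1 - x ^ 2)) ^ 2)
      * upperFactor √(1 - x ^ 2)) x := by
  refine ((hasDerivAt_oddSeptic _ _ _ _ x).sub (hasDerivAt_arcsinSubShafer hx)).congr_deriv ?_
  have hq : 0 < 1 - x ^ 2 := by nlinarith [hx.1, hx.2]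
  have hx2 : x ^ 2 = 1 - √(1 - x ^ 2) ^ 2 := by rw [sq_sqrt hq.le]; ring
  set s := √(1 - x ^ 2)
  have hs : 0 < s := sqrt_pos.mpr hq
  rw [hx2, upperFactor]
  field_simp
  ring

lemma lowerGap_zero : lowerGap 0 = 0 := by simp [lowerGap, arcsinSubShafer_zero, oddSeptic]

lemma upperGap_zero : upperGap 0 = 0 := by simp [upperGap, arcsinSubShafer_zero, oddSeptic]

lemma upperGap_one : upperGap 1 = 0 := by
  simp only [upperGap, arcsinSubShafer_one, oddSeptic]
  ring

lemma lowerGap_pos {x : ℝ} (hx : x ∈ Ioo 0 1) : 0 < lowerGap x := by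
  obtain ⟨ξ, hξ, hslope⟩ := exists_hasDerivAt_eq_slope lowerGap _ hx.1
    (continuous_arcsinSubShafer.sub (continuous_oddSeptic _ _ _ _)).continuousOn
    fun y hy => hasDerivAt_lowerGap ⟨by linarith [hy.1], hy.2.trans hx.2⟩
  have hξ1 : ξ ∈ Ioo 0 1 := ⟨hξ.1, hξ.2.trans hx.2⟩
  have hpos := mul_pos (one_sub_pow_div_pos (sqrt_one_sub_sq_mem_Ioo hξ1) 4)
    (lowerFactor_pos (sqrt_nonneg (1 - ξ ^ 2)))
  rw [hslope, lowerGap_zero, sub_zero, sub_zero] at hpos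
  exact (div_pos_iff_of_pos_right hx.1).1 hpos

lemma upperGap_pos {x : ℝ} (hx : x ∈ Ioo 0 1) : 0 < upperGap x := by
  refine pos_on_Ioo_of_hasDerivAt_of_sign_change
    (continuous_oddSeptic _ _ _ _ |>.sub continuous_arcsinSubShafer).continuousOn
    (fun y hy => hasDerivAt_upperGap ⟨by linarith [hy.1], hy.2⟩)
    upperGap_zero.ge upperGap_one.ge ?_ x hx
  intro ξ hξ η hη hξη hη_nonneg
  have hsξ := sqrt_one_sub_sq_mem_Ioo hξ
  have hsη := sqrt_one_sub_sq_mem_Ioo hη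
  have hs_lt : √(1 - η ^ 2) < √(1 - ξ ^ 2) :=
    sqrt_lt_sqrt (by nlinarith [hη.1, hη.2]) (by nlinarith [hξ.1])
  have hfactor := (mul_nonneg_iff_of_pos_left (one_sub_pow_div_pos hsη 3)).1 hη_nonneg
  exact mul_pos (one_sub_pow_div_pos hsξ 3)
    (hfactor.trans_lt (upperFactor_strictMonoOn hsη.1.le hsξ.1.le hs_lt))

theorem shaferPi_n3 (x : ℝ) (hx : x ∈ Set.Ioo (0 : ℝ) 1) :
    (1 - π / 3) * x + (1 / 6 - π / 18) * x ^ 3 + (3 / 40 - 5 * π / 216) * x ^ 5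
        + (5 / 112 - 17 * π / 1296) * x ^ 7
      < Real.arcsin x - π * x / (2 + Real.sqrt (1 - x ^ 2)) ∧
    Real.arcsin x - π * x / (2 + Real.sqrt (1 - x ^ 2))
      < (1 - π / 3) * x + (1 / 6 - π / 18) * x ^ 3 + (3 / 40 - 5 * π / 216) * x ^ 5
        + (-(149 / 120) + 89 * π / 216) * x ^ 7 :=
  ⟨sub_pos.1 (lowerGap_pos hx), sub_pos.1 (upperGap_pos hx)⟩
end

section
/- For every x ∈ (0,1): ( x⁵/60 + 11x⁷/840 ) / (2+√(1−x²)) < arcsin x − 3x/(2+√(1−x²)) < ( x⁵/60 + (π − 181/60)·x⁷ ) / (2+√(1−x²)). -/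
/-!
Put θ = arcsin x, so that sin θ = x and cos θ = √(1 - x²); after clearing the denominator
2 + cos θ both inequalities become trigonometric inequalities on (0, π/2).

The Maclaurin polynomials of sin and cos bound them alternately from above and below on [0, ∞),
each bound being the integral of the previous one. This reduces the lower bound, and the upper
bound for θ ≤ 5/4, to polynomial inequalities in θ. The upper bound is an equality at θ = π/2,
so there it is obtained from concavity instead: on [5/4, π/2] the difference of the two sides
has nonpositive second derivative (because tan² θ ≥ 6 there), is positive at 5/4 and vanishes
at π/2.
-/

open Real
open scoped Nat

noncomputable def sinTaylor (n : ℕ) (t : ℝ) : ℝ :=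
  ∑ k ∈ Finset.range n, (-1) ^ k * t ^ (2 * k + 1) / (2 * k + 1)!

noncomputable def cosTaylor (n : ℕ) (t : ℝ) : ℝ :=
  ∑ k ∈ Finset.range n, (-1) ^ k * t ^ (2 * k) / (2 * k)!

theorem hasDerivAt_sinTaylor (n : ℕ) (t : ℝ) :
    HasDerivAt (sinTaylor n) (cosTaylor n t) t := by
  unfold sinTaylor cosTaylor
  refine HasDerivAt.fun_sum fun k _ => ?_
  refine (((hasDerivAt_pow (2 * k + 1) t).const_mul ((-1 : ℝ) ^ k)).div_const
    ((2 * k + 1)! : ℝ)).congr_deriv ?_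
  rw [Nat.factorial_succ]
  push_cast
  field_simp

theorem hasDerivAt_cosTaylor_succ (n : ℕ) (t : ℝ) :
    HasDerivAt (cosTaylor (n + 1)) (-sinTaylor n t) t := by
  have h : cosTaylor (n + 1) = fun t =>
      ∑ k ∈ Finset.range n, (-1 : ℝ) ^ (k + 1) * t ^ (2 * k + 2) / (2 * k + 2)! + 1 := by
    ext t
    simp [cosTaylor, Finset.sum_range_succ', mul_add]
  rw [h, sinTaylor, ← Finset.sum_neg_distrib]
  refine (HasDerivAt.fun_sum fun k _ => ?_).add_const 1
  refine (((hasDerivAt_pow (2 * k + 2) t).const_mul ((-1 : ℝ) ^ (k + 1))).div_const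
    ((2 * k + 2)! : ℝ)).congr_deriv ?_
  rw [Nat.factorial_succ]
  push_cast
  field_simp
  ring

theorem nonneg_of_hasDerivAt_nonneg {f f' : ℝ → ℝ} (hf : ∀ x, HasDerivAt f (f' x) x)
    (hf' : ∀ x, 0 < x → 0 ≤ f' x) (h0 : f 0 = 0) {t : ℝ} (ht : 0 ≤ t) : 0 ≤ f t := by
  have hmono : MonotoneOn f (Set.Ici 0) :=
    monotoneOn_of_hasDerivWithinAt_nonneg (convex_Ici 0)
      (HasDerivAt.continuousOn fun x _ => hf x)
      (fun x _ => (hf x).hasDerivWithinAt) (by simpa using hf')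
  simpa [h0] using hmono Set.self_mem_Ici ht ht

theorem sinTaylor_cosTaylor_alternating (n : ℕ) :
    (∀ t, 0 ≤ t → 0 ≤ (-1) ^ n * (cosTaylor (n + 1) t - cos t)) ∧
    (∀ t, 0 ≤ t → 0 ≤ (-1) ^ n * (sinTaylor (n + 1) t - sin t)) := by
  have sin_of_cos : ∀ n : ℕ, (∀ t, 0 ≤ t → 0 ≤ (-1) ^ n * (cosTaylor (n + 1) t - cos t)) →
      ∀ t, 0 ≤ t → 0 ≤ (-1) ^ n * (sinTaylor (n + 1) t - sin t) := fun n hcos t ht =>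
    nonneg_of_hasDerivAt_nonneg
      (fun x => ((hasDerivAt_sinTaylor _ x).sub (hasDerivAt_sin x)).const_mul _)
      (fun x hx => hcos x hx.le) (by simp [sinTaylor]) ht
  induction n with
  | zero =>
    have hcos : ∀ t, 0 ≤ t → 0 ≤ (-1) ^ 0 * (cosTaylor 1 t - cos t) := fun t _ => by
      simpa [cosTaylor] using cos_le_one t
    exact ⟨hcos, sin_of_cos 0 hcos⟩
  | succ n ih =>
    have hcos : ∀ t, 0 ≤ t → 0 ≤ (-1) ^ (n + 1) * (cosTaylor (n + 2) t - cos t) := fun t ht =>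
      nonneg_of_hasDerivAt_nonneg
        (fun x => ((hasDerivAt_cosTaylor_succ _ x).sub (hasDerivAt_cos x)).const_mul _)
        (fun x hx => by have := ih.2 x hx.le; rw [pow_succ]; linarith)
        (by simp [cosTaylor, Finset.sum_range_succ']) ht
    exact ⟨hcos, sin_of_cos _ hcos⟩

variable {t : ℝ}

theorem sin_le_sinTaylor {n : ℕ} (hn : Even n) (ht : 0 ≤ t) : sin t ≤ sinTaylor (n + 1) t := by
  have := (sinTaylor_cosTaylor_alternating n).2 t ht
  rw [hn.neg_one_pow, one_mul] at this
  linarith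

theorem sinTaylor_le_sin {n : ℕ} (hn : Odd n) (ht : 0 ≤ t) : sinTaylor (n + 1) t ≤ sin t := by
  have := (sinTaylor_cosTaylor_alternating n).2 t ht
  rw [hn.neg_one_pow, neg_one_mul] at this
  linarith

theorem cos_le_cosTaylor {n : ℕ} (hn : Even n) (ht : 0 ≤ t) : cos t ≤ cosTaylor (n + 1) t := by
  have := (sinTaylor_cosTaylor_alternating n).1 t ht
  rw [hn.neg_one_pow, one_mul] at this
  linarith

theorem cosTaylor_le_cos {n : ℕ} (hn : Odd n) (ht : 0 ≤ t) : cosTaylor (n + 1) t ≤ cos t := by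
  have := (sinTaylor_cosTaylor_alternating n).1 t ht
  rw [hn.neg_one_pow, neg_one_mul] at this
  linarith

/- The polynomial inequalities below are certified by writing the difference of the two sides as
`θ ^ j * Q (θ ^ 2)` with `Q` a positive combination of the Bernstein products
`u ^ k * (a - u) ^ m`, `k + m = deg Q`, which are nonnegative for `0 ≤ u ≤ a`;
`linarith` finds the weights. -/
theorem pow_mul_sub_pow_nonneg {u a : ℝ} (hu : 0 ≤ u) (hua : u ≤ a) (k m : ℕ) :
    0 ≤ u ^ k * (a - u) ^ m := by
  have := sub_nonneg.2 hua
  positivity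

theorem shafer_lower_poly {θ : ℝ} (h0 : 0 < θ) (h : θ ^ 2 ≤ 5 / 2) :
    3 * sinTaylor 5 θ + sinTaylor 3 θ ^ 5 / 60 + 11 * sinTaylor 3 θ ^ 7 / 840
      < (2 + cosTaylor 4 θ) * θ := by
  norm_num [sinTaylor, cosTaylor, Finset.sum_range_succ, Nat.factorial]
  have B := fun k m => mul_nonneg (pow_nonneg h0.le 9) (pow_mul_sub_pow_nonneg (sq_nonneg θ) h k m)
  linarith [B 0 13, B 1 12, B 2 11, B 3 10, B 4 9, B 5 8, B 6 7, B 7 6, B 8 5, B 9 4, B 10 3,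
    B 11 2, B 12 1, pow_pos h0 35]

theorem shafer_upper_poly {θ : ℝ} (h0 : 0 < θ) (h : θ ^ 2 ≤ 25 / 16) :
    (2 + cosTaylor 3 θ) * θ
      < 3 * sinTaylor 4 θ + sinTaylor 2 θ ^ 5 / 60 + (3.14 - 181 / 60) * sinTaylor 2 θ ^ 7 := by
  norm_num [sinTaylor, cosTaylor, Finset.sum_range_succ, Nat.factorial]
  have B := fun k m => mul_nonneg (pow_nonneg h0.le 7) (pow_mul_sub_pow_nonneg (sq_nonneg θ) h k m)
  linarith [B 0 7, B 1 6, B 2 5, B 3 4, B 4 3, B 5 2, B 6 1, pow_pos h0 21]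

theorem ConcaveOn.pos_of_pos_of_nonneg {f : ℝ → ℝ} {a b x : ℝ} (hf : ConcaveOn ℝ (Set.Icc a b) f)
    (ha : 0 < f a) (hb : 0 ≤ f b) (hx : x ∈ Set.Ico a b) : 0 < f x := by
  rcases hx.1.eq_or_lt with rfl | hax
  · exact ha
  obtain ⟨μ, ν, hμ, hν, hμν, rfl⟩ : x ∈ openSegment ℝ a b := by
    rw [openSegment_eq_Ioo (hax.trans hx.2)]
    exact ⟨hax, hx.2⟩
  have hab : a ≤ b := (hax.trans hx.2).le
  have := hf.2 ⟨le_rfl, hab⟩ ⟨hab, le_rfl⟩ hμ.le hν.le hμν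
  simp only [smul_eq_mul] at this ⊢
  nlinarith

theorem shafer_lower_trig {θ : ℝ} (h0 : 0 < θ) (h1 : θ < π / 2) :
    3 * sin θ + sin θ ^ 5 / 60 + 11 * sin θ ^ 7 / 840 < (2 + cos θ) * θ := by
  have hsin : 0 ≤ sin θ := sin_nonneg_of_nonneg_of_le_pi h0.le (by linarith [pi_pos])
  have hsin3 : sin θ ≤ sinTaylor 3 θ := sin_le_sinTaylor (by decide) h0.le
  have hθ : θ ^ 2 ≤ 5 / 2 := by nlinarith [pi_lt_d2]
  calc 3 * sin θ + sin θ ^ 5 / 60 + 11 * sin θ ^ 7 / 840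
      ≤ 3 * sinTaylor 5 θ + sinTaylor 3 θ ^ 5 / 60 + 11 * sinTaylor 3 θ ^ 7 / 840 := by
        gcongr
        exact sin_le_sinTaylor (by decide) h0.le
    _ < (2 + cosTaylor 4 θ) * θ := shafer_lower_poly h0 hθ
    _ ≤ (2 + cos θ) * θ := by
        gcongr
        exact cosTaylor_le_cos (by decide) h0.le

theorem shafer_upper_trig_of_le {θ : ℝ} (h0 : 0 < θ) (h1 : θ ≤ 5 / 4) :
    (2 + cos θ) * θ < 3 * sin θ + sin θ ^ 5 / 60 + (π - 181 / 60) * sin θ ^ 7 := by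
  have hθ : θ ^ 2 ≤ 25 / 16 := by nlinarith
  have hT : 0 ≤ sinTaylor 2 θ := by
    norm_num [sinTaylor, Finset.sum_range_succ, Nat.factorial]
    nlinarith
  have hsin2 : sinTaylor 2 θ ≤ sin θ := sinTaylor_le_sin (by decide) h0.le
  calc (2 + cos θ) * θ ≤ (2 + cosTaylor 3 θ) * θ := by
        gcongr
        exact cos_le_cosTaylor (by decide) h0.le
    _ < 3 * sinTaylor 4 θ + sinTaylor 2 θ ^ 5 / 60 + (3.14 - 181 / 60) * sinTaylor 2 θ ^ 7 :=
        shafer_upper_poly h0 hθ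
    _ ≤ 3 * sin θ + sin θ ^ 5 / 60 + (π - 181 / 60) * sin θ ^ 7 := by
        gcongr
        · exact sinTaylor_le_sin (n := 3) (by decide) h0.le
        · linarith [pi_gt_d2]
        · exact pi_gt_d2.le

theorem shafer_upper_deriv2_nonpos {k t : ℝ} (hk : 0 ≤ k) (h1 : 5 / 4 ≤ t) (h2 : t < π / 2) :
    7 * k * (6 * sin t ^ 5 * cos t ^ 2 - sin t ^ 7) + (4 * sin t ^ 3 * cos t ^ 2 - sin t ^ 5) / 12
      - sin t + t * cos t ≤ 0 := by
  have hc0 : 0 < cos t := cos_pos_of_mem_Ioo ⟨by linarith [pi_pos], h2⟩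
  have hs0 : 0 ≤ sin t := sin_nonneg_of_nonneg_of_le_pi (by linarith) (by linarith [pi_pos])
  have hc : cos t ≤ 1 / 3 := calc
    cos t ≤ cos (5 / 4) := cos_le_cos_of_nonneg_of_le_pi (by norm_num) (by linarith [pi_pos]) h1
    _ ≤ cosTaylor 3 (5 / 4) := cos_le_cosTaylor (by decide) (by norm_num)
    _ ≤ 1 / 3 := by norm_num [cosTaylor, Finset.sum_range_succ, Nat.factorial]
  have htan : t * cos t ≤ sin t := by
    have := le_tan (by linarith) h2
    rwa [tan_eq_sin_div_cos, le_div_iff₀ hc0] at this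
  have hsc : sin t ^ 2 = 1 - cos t ^ 2 := by rw [← sin_sq_add_cos_sq t]; ring
  have h7 : 6 * sin t ^ 5 * cos t ^ 2 - sin t ^ 7 ≤ 0 := by
    have : 6 * sin t ^ 5 * cos t ^ 2 - sin t ^ 7 = sin t ^ 5 * (7 * cos t ^ 2 - 1) := by
      rw [show sin t ^ 7 = sin t ^ 5 * sin t ^ 2 by ring, hsc]; ring
    rw [this]
    exact mul_nonpos_of_nonneg_of_nonpos (by positivity) (by nlinarith)
  have h5 : 4 * sin t ^ 3 * cos t ^ 2 - sin t ^ 5 ≤ 0 := by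
    have : 4 * sin t ^ 3 * cos t ^ 2 - sin t ^ 5 = sin t ^ 3 * (5 * cos t ^ 2 - 1) := by
      rw [show sin t ^ 5 = sin t ^ 3 * sin t ^ 2 by ring, hsc]; ring
    rw [this]
    exact mul_nonpos_of_nonneg_of_nonpos (by positivity) (by nlinarith)
  nlinarith [mul_nonpos_of_nonneg_of_nonpos (by positivity : 0 ≤ 7 * k) h7]

theorem shafer_upper_trig_of_ge {θ : ℝ} (h1 : 5 / 4 ≤ θ) (h2 : θ < π / 2) :
    (2 + cos θ) * θ < 3 * sin θ + sin θ ^ 5 / 60 + (π - 181 / 60) * sin θ ^ 7 := by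
  set k := π - 181 / 60 with hk
  have hk0 : 0 ≤ k := by linarith [pi_gt_d2]
  set H : ℝ → ℝ := fun t => 3 * sin t + sin t ^ 5 / 60 + k * sin t ^ 7 - (2 + cos t) * t
  set H' : ℝ → ℝ := fun t => 3 * cos t + sin t ^ 4 * cos t / 12 + 7 * k * sin t ^ 6 * cos t
    - (2 + cos t) + t * sin t
  have hH : ∀ t, HasDerivAt H (H' t) t := fun t => by
    refine (((((hasDerivAt_sin t).const_mul 3).add ((hasDerivAt_sin t).pow 5 |>.div_const 60)).add
      (((hasDerivAt_sin t).pow 7).const_mul k)).sub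
      (((hasDerivAt_cos t).const_add 2).mul (hasDerivAt_id t))).congr_deriv ?_
    simp only [H', id]
    ring
  have hH' : ∀ t, HasDerivAt H' (7 * k * (6 * sin t ^ 5 * cos t ^ 2 - sin t ^ 7)
      + (4 * sin t ^ 3 * cos t ^ 2 - sin t ^ 5) / 12 - sin t + t * cos t) t := fun t => by
    refine ((((((hasDerivAt_cos t).const_mul 3).add
      ((((hasDerivAt_sin t).pow 4).mul (hasDerivAt_cos t)).div_const 12)).add
      ((((hasDerivAt_sin t).pow 6).const_mul (7 * k)).mul (hasDerivAt_cos t))).sub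
      ((hasDerivAt_cos t).const_add 2)).add
      ((hasDerivAt_id t).mul (hasDerivAt_sin t))).congr_deriv ?_
    simp only [id, Pi.pow_apply]
    ring
  have hconc : ConcaveOn ℝ (Set.Icc (5 / 4) (π / 2)) H :=
    concaveOn_of_hasDerivWithinAt2_nonpos (convex_Icc _ _)
      (HasDerivAt.continuousOn fun t _ => hH t) (fun t _ => (hH t).hasDerivWithinAt)
      (fun t _ => (hH' t).hasDerivWithinAt) fun t ht => by
        rw [interior_Icc] at ht
        exact shafer_upper_deriv2_nonpos hk0 ht.1.le ht.2
  have hleft : 0 < H (5 / 4) := by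
    have := shafer_upper_trig_of_le (θ := 5 / 4) (by norm_num) le_rfl
    simp only [H, hk]
    linarith
  have hright : H (π / 2) = 0 := by
    simp only [H, sin_pi_div_two, cos_pi_div_two, hk]
    ring
  have := hconc.pos_of_pos_of_nonneg hleft hright.ge ⟨h1, h2⟩
  simp only [H] at this
  linarith

theorem shafer_upper_trig {θ : ℝ} (h0 : 0 < θ) (h1 : θ < π / 2) :
    (2 + cos θ) * θ < 3 * sin θ + sin θ ^ 5 / 60 + (π - 181 / 60) * sin θ ^ 7 :=
  (le_or_gt θ (5 / 4)).elim (shafer_upper_trig_of_le h0) fun h => shafer_upper_trig_of_ge h.le h1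

theorem shaferE_n3 (x : ℝ) (hx : x ∈ Set.Ioo (0 : ℝ) 1) :
    (x ^ 5 / 60 + 11 * x ^ 7 / 840) / (2 + Real.sqrt (1 - x ^ 2))
      < Real.arcsin x - 3 * x / (2 + Real.sqrt (1 - x ^ 2)) ∧
    Real.arcsin x - 3 * x / (2 + Real.sqrt (1 - x ^ 2))
      < (x ^ 5 / 60 + (π - 181 / 60) * x ^ 7) / (2 + Real.sqrt (1 - x ^ 2)) := by
  obtain ⟨hx0, hx1⟩ := hx
  have hθ0 : 0 < arcsin x := arcsin_pos.2 hx0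
  have hθ1 : arcsin x < π / 2 := arcsin_lt_pi_div_two.2 hx1
  have hsin : sin (arcsin x) = x := sin_arcsin (by linarith) hx1.le
  have hD : 0 < 2 + √(1 - x ^ 2) := by positivity
  have hlower := shafer_lower_trig hθ0 hθ1
  have hupper := shafer_upper_trig hθ0 hθ1
  rw [hsin, cos_arcsin] at hlower hupper
  constructor
  · rw [lt_sub_iff_add_lt, ← add_div, div_lt_iff₀ hD]
    linarith
  · rw [sub_lt_iff_lt_add, ← add_div, lt_div_iff₀ hD]
    linarith
end

section
/- For every x ∈ (0,1): ( x⁵/60 + 11x⁷/840 + 67x⁹/6720 + 3461x¹¹/443520 ) / (2+√(1−x²)) < arcsin x − 3x/(2+√(1−x²)) < ( x⁵/60 + 11x⁷/840 + 67x⁹/6720 + (π − 6809/2240)·x¹¹ ) / (2+√(1−x²)). -/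
/-!
Write `F_a x = (3x + x⁵/60 + 11x⁷/840 + 67x⁹/6720 + a x¹¹) / (2 + √(1 - x²))`; the claim is
`F_a x < arcsin x` for `a = 3461/443520` and `arcsin x < F_a x` for `a = π - 6809/2240`, and
both sides vanish at `0`. With `s = √(1 - x²)` one has
`(arcsin - F_a)' = N_a(x, s) / (s (2 + s)²)` for a polynomial `N_a`, which becomes
`A_a(x) - s B_a(x)` once `s²` is replaced by `1 - x²`; its sign is then decided by comparing
`A_a²` with `(1 - x²) B_a²`, a polynomial inequality in `x`. This gives `N_a > 0` on `(0, 1]` for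
the lower constant, and `N_a < 0` on `(0, 19/20]` for the upper one, since `N_a` decreases in `a`
and `π - 6809/2240 > 713019/7000000`. Near `1`, where the upper bound is sharp (`F_a 1 = π/2`),
use `arcsin x = π/2 - arcsin s < π/2 - s - s³/6` instead, which leaves a polynomial inequality
in `x` and `s`.
-/

open Real Set

lemma lt_of_hasDerivAt_lt_of_eq {f g f' g' : ℝ → ℝ} {a b : ℝ} (hab : a < b) (hfg : f a = g a)
    (hf : ∀ t ∈ Icc a b, HasDerivAt f (f' t) t) (hg : ∀ t ∈ Icc a b, HasDerivAt g (g' t) t)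
    (hlt : ∀ t ∈ Ioo a b, f' t < g' t) : f b < g b := by
  have hmono : StrictMonoOn (g - f) (Icc a b) := by
    refine strictMonoOn_of_deriv_pos (convex_Icc a b) (fun t ht => ?_) fun t ht => ?_
    · exact ((hg t ht).sub (hf t ht)).continuousAt.continuousWithinAt
    · rw [interior_Icc] at ht
      rw [((hg t (Ioo_subset_Icc_self ht)).sub (hf t (Ioo_subset_Icc_self ht))).deriv]
      exact sub_pos.2 (hlt t ht)
  have := hmono (left_mem_Icc.2 hab.le) (right_mem_Icc.2 hab.le) hab
  simp only [Pi.sub_apply, hfg, sub_self, sub_pos] at this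
  exact this

lemma sqrt_one_sub_sq_pos {t : ℝ} (ht : t ∈ Ioo (-1) 1) : 0 < √(1 - t ^ 2) :=
  sqrt_pos.2 (by nlinarith [ht.1, ht.2])

lemma hasDerivAt_arcsin_of_mem_Icc_zero {x t : ℝ} (hx : x < 1) (ht : t ∈ Icc 0 x) :
    HasDerivAt arcsin (1 / √(1 - t ^ 2)) t :=
  hasDerivAt_arcsin (by linarith [ht.1]) (by linarith [ht.2])

lemma one_add_sq_div_two_lt_inv_sqrt {y : ℝ} (hy : y ∈ Ioo 0 1) :
    1 + y ^ 2 / 2 < 1 / √(1 - y ^ 2) := by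
  rw [lt_div_iff₀ (sqrt_one_sub_sq_pos (Ioo_subset_Ioo_left (by norm_num) hy))]
  refine lt_of_pow_lt_pow_left₀ 2 zero_le_one ?_
  rw [mul_pow, sq_sqrt (by nlinarith [hy.1, hy.2])]
  nlinarith [pow_pos hy.1 4, pow_pos hy.1 6]

lemma add_cube_div_six_lt_arcsin {y : ℝ} (hy : y ∈ Ioo 0 1) : y + y ^ 3 / 6 < arcsin y := by
  refine lt_of_hasDerivAt_lt_of_eq (f := fun t => t + t ^ 3 / 6) (f' := fun t => 1 + t ^ 2 / 2) hy.1
    (by simp) (fun t _ => ?_)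
    (fun t ht => hasDerivAt_arcsin_of_mem_Icc_zero hy.2 ht) fun t ht => ?_
  · exact ((hasDerivAt_id' t).add ((hasDerivAt_pow 3 t).div_const 6)).congr_deriv
      (by norm_num; ring)
  · exact one_add_sq_div_two_lt_inv_sqrt ⟨ht.1, ht.2.trans hy.2⟩

noncomputable def shaferTail (a x : ℝ) : ℝ :=
  x ^ 5 / 60 + 11 * x ^ 7 / 840 + 67 * x ^ 9 / 6720 + a * x ^ 11

noncomputable def shaferTailDeriv (a x : ℝ) : ℝ :=
  x ^ 4 / 12 + 11 * x ^ 6 / 120 + 201 * x ^ 8 / 2240 + 11 * a * x ^ 10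

noncomputable def shaferApprox (a x : ℝ) : ℝ := (3 * x + shaferTail a x) / (2 + √(1 - x ^ 2))

noncomputable def shaferNum (a x s : ℝ) : ℝ :=
  (2 + s) ^ 2 - s * (3 + shaferTailDeriv a x) * (2 + s) - x * (3 * x + shaferTail a x)

noncomputable def shaferNumA (a x : ℝ) : ℝ :=
  2 - x ^ 2 - (1 - x ^ 2) * shaferTailDeriv a x - x * shaferTail a x

noncomputable def shaferNumB (a x : ℝ) : ℝ := 2 + 2 * shaferTailDeriv a x

lemma hasDerivAt_shaferApprox (a : ℝ) {t : ℝ} (ht : t ∈ Ioo (-1) 1) :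
    HasDerivAt (shaferApprox a)
      (1 / √(1 - t ^ 2)
        - shaferNum a t √(1 - t ^ 2) / (√(1 - t ^ 2) * (2 + √(1 - t ^ 2)) ^ 2)) t := by
  have hs := sqrt_one_sub_sq_pos ht
  have h1t : 0 < 1 - t ^ 2 := sqrt_pos.1 hs
  have hnum : HasDerivAt (fun y => 3 * y + shaferTail a y) (3 + shaferTailDeriv a t) t := by
    unfold shaferTail shaferTailDeriv
    exact ((hasDerivAt_id' t).const_mul 3 |>.add <| (((hasDerivAt_pow 5 t).div_const 60).add
      (((hasDerivAt_pow 7 t).const_mul 11).div_const 840)).add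
      (((hasDerivAt_pow 9 t).const_mul 67).div_const 6720) |>.add
      ((hasDerivAt_pow 11 t).const_mul a)).congr_deriv (by push_cast; ring)
  have hden : HasDerivAt (fun y => 2 + √(1 - y ^ 2)) (-(2 * t) / (2 * √(1 - t ^ 2))) t :=
    (((hasDerivAt_pow 2 t).const_sub 1).sqrt h1t.ne').const_add 2 |>.congr_deriv (by ring)
  refine (hnum.div hden (by positivity)).congr_deriv ?_
  unfold shaferNum
  field_simp
  ring

lemma shaferApprox_zero (a : ℝ) : shaferApprox a 0 = 0 := by
  simp [shaferApprox, shaferTail]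

lemma shaferApprox_lt_arcsin {a x : ℝ} (hx : x ∈ Ioo 0 1)
    (hnum : ∀ t ∈ Ioo 0 x, ∀ s, 0 ≤ s → s ^ 2 = 1 - t ^ 2 → 0 < shaferNum a t s) :
    shaferApprox a x < arcsin x := by
  have hsub : Icc 0 x ⊆ Ioo (-1) 1 := Icc_subset_Ioo (by norm_num) hx.2
  refine lt_of_hasDerivAt_lt_of_eq hx.1 (by rw [shaferApprox_zero, arcsin_zero])
    (fun t ht => hasDerivAt_shaferApprox a (hsub ht))
    (fun t ht => hasDerivAt_arcsin_of_mem_Icc_zero hx.2 ht) fun t ht => ?_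
  have hs := sqrt_one_sub_sq_pos (hsub (Ioo_subset_Icc_self ht))
  have hN := hnum t ht _ hs.le (sq_sqrt (by nlinarith [ht.1, ht.2, hx.2]))
  exact sub_lt_self _ (div_pos hN (by positivity))

lemma arcsin_lt_shaferApprox {a x : ℝ} (hx : x ∈ Ioo 0 1)
    (hnum : ∀ t ∈ Ioo 0 x, ∀ s, 0 ≤ s → s ^ 2 = 1 - t ^ 2 → shaferNum a t s < 0) :
    arcsin x < shaferApprox a x := by
  have hsub : Icc 0 x ⊆ Ioo (-1) 1 := Icc_subset_Ioo (by norm_num) hx.2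
  refine lt_of_hasDerivAt_lt_of_eq hx.1 (by rw [shaferApprox_zero, arcsin_zero])
    (fun t ht => hasDerivAt_arcsin_of_mem_Icc_zero hx.2 ht)
    (fun t ht => hasDerivAt_shaferApprox a (hsub ht)) fun t ht => ?_
  have hs := sqrt_one_sub_sq_pos (hsub (Ioo_subset_Icc_self ht))
  have hN := hnum t ht _ hs.le (sq_sqrt (by nlinarith [ht.1, ht.2, hx.2]))
  have hq : shaferNum a t √(1 - t ^ 2) / (√(1 - t ^ 2) * (2 + √(1 - t ^ 2)) ^ 2) < 0 :=
    div_neg_of_neg_of_pos hN (by positivity)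
  linarith

lemma shaferNum_eq_sub_mul {a x s : ℝ} (hs2 : s ^ 2 = 1 - x ^ 2) :
    shaferNum a x s = shaferNumA a x - s * shaferNumB a x := by
  unfold shaferNum shaferNumA shaferNumB
  linear_combination (-2 - shaferTailDeriv a x) * hs2

lemma shaferNum_pos_of_le_one {x s : ℝ} (hx : x ∈ Ioc 0 1)
    (hs2 : s ^ 2 = 1 - x ^ 2) : 0 < shaferNum (3461 / 443520) x s := by
  obtain ⟨hx0, hx1⟩ := hx
  have hnn (n : ℕ) : 0 ≤ x ^ n := pow_nonneg hx0.le n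
  have hpow (n : ℕ) : x ^ n ≤ 1 := pow_le_one₀ hx0.le hx1
  have hR : 0 < 29011 / 29568 - 8165 / 44352 * x ^ 2 + 217093 / 14192640 * x ^ 4
      + 253507 / 8515584 * x ^ 6 + 7258445 / 238436352 * x ^ 8
      + 7084667 / 248371200 * x ^ 10 + 11978521 / 1967099904 * x ^ 12 := by
    linarith [hpow 2, hnn 4, hnn 6, hnn 8, hnn 10, hnn 12]
  have hA : 0 ≤ shaferNumA (3461 / 443520) x := by
    have hA_eq : shaferNumA (3461 / 443520) x = 2 - x ^ 2 - x ^ 4 / 12 - x ^ 6 / 40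
        - 5 * x ^ 8 / 448 - 7 * x ^ 10 / 1152 + 3461 * x ^ 12 / 44352 := by
      unfold shaferNumA shaferTailDeriv shaferTail
      ring
    linarith [hpow 2, hpow 4, hpow 6, hpow 8, hpow 10, hnn 12]
  have hsq : (s * shaferNumB (3461 / 443520) x) ^ 2 < shaferNumA (3461 / 443520) x ^ 2 := by
    have hdiff : shaferNumA (3461 / 443520) x ^ 2 - (s * shaferNumB (3461 / 443520) x) ^ 2
        = x ^ 12 * (29011 / 29568 - 8165 / 44352 * x ^ 2 + 217093 / 14192640 * x ^ 4
          + 253507 / 8515584 * x ^ 6 + 7258445 / 238436352 * x ^ 8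
          + 7084667 / 248371200 * x ^ 10 + 11978521 / 1967099904 * x ^ 12) := by
      rw [mul_pow, hs2]
      unfold shaferNumA shaferNumB shaferTailDeriv shaferTail
      ring
    linarith [mul_pos (pow_pos hx0 12) hR]
  rw [shaferNum_eq_sub_mul hs2, sub_pos]
  exact (le_abs_self _).trans_lt (abs_lt_of_sq_lt_sq hsq hA)

lemma shaferNum_antitone {x s : ℝ} (hs : 0 ≤ s) : Antitone fun a => shaferNum a x s := by
  intro a b hab
  have hdiff : shaferNum a x s - shaferNum b x s
      = (b - a) * (11 * s * x ^ 10 * (2 + s) + x ^ 12) := by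
    unfold shaferNum shaferTailDeriv shaferTail
    ring
  have : 0 ≤ (b - a) * (11 * s * x ^ 10 * (2 + s) + x ^ 12) := by
    have := sub_nonneg.2 hab
    positivity
  linarith

lemma shaferNum_neg_of_le {x s : ℝ} (hx : x ∈ Ioc 0 (19 / 20)) (hs : 0 ≤ s)
    (hs2 : s ^ 2 = 1 - x ^ 2) : shaferNum (713019 / 7000000) x s < 0 := by
  obtain ⟨hx0, hx1⟩ := hx
  have hv : 0 ≤ 361 / 400 - x ^ 2 := by nlinarith
  have hH : 0 < 130362137 / 10500000 - 25350559 / 1680000 * x ^ 2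
      + 650798317 / 252000000 * x ^ 4 + 1066518619 / 6720000000 * x ^ 6
      - 513859373 / 23520000000 * x ^ 8 + 1392266368389887 / 441000000000000 * x ^ 10
      - 17772326801413 / 6125000000000 * x ^ 12 - 508396094361 / 490000000000 * x ^ 14 := by
    -- positive combination of the products `x^(2i) (361/400 - x²)^(7-i)`
    nlinarith [pow_nonneg hv 7, mul_nonneg (pow_nonneg hx0.le 2) (pow_nonneg hv 6),
      mul_nonneg (pow_nonneg hx0.le 4) (pow_nonneg hv 5),
      mul_nonneg (pow_nonneg hx0.le 6) (pow_nonneg hv 4),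
      mul_nonneg (pow_nonneg hx0.le 8) (pow_nonneg hv 3),
      mul_nonneg (pow_nonneg hx0.le 10) (pow_nonneg hv 2),
      mul_nonneg (pow_nonneg hx0.le 12) hv, pow_pos hx0 14]
  have hsq : shaferNumA (713019 / 7000000) x ^ 2 < (s * shaferNumB (713019 / 7000000) x) ^ 2 := by
    have hdiff : (s * shaferNumB (713019 / 7000000) x) ^ 2 - shaferNumA (713019 / 7000000) x ^ 2
        = x ^ 10 * (130362137 / 10500000 - 25350559 / 1680000 * x ^ 2
          + 650798317 / 252000000 * x ^ 4 + 1066518619 / 6720000000 * x ^ 6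
          - 513859373 / 23520000000 * x ^ 8 + 1392266368389887 / 441000000000000 * x ^ 10
          - 17772326801413 / 6125000000000 * x ^ 12 - 508396094361 / 490000000000 * x ^ 14) := by
      rw [mul_pow, hs2]
      unfold shaferNumA shaferNumB shaferTailDeriv shaferTail
      ring
    linarith [mul_pos (pow_pos hx0 10) hH]
  have hsB : 0 ≤ s * shaferNumB (713019 / 7000000) x := by
    unfold shaferNumB shaferTailDeriv
    positivity
  rw [shaferNum_eq_sub_mul hs2, sub_neg]
  exact (le_abs_self _).trans_lt (abs_lt_of_sq_lt_sq hsq hsB)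

lemma pi_div_two_sub_mul_lt_of_near_one {x s : ℝ} (hx : x ∈ Ico (19 / 20) 1) (hs : 0 < s)
    (hs2 : s ^ 2 = 1 - x ^ 2) :
    (π / 2 - s - s ^ 3 / 6) * (2 + s) < 3 * x + shaferTail (π - 6809 / 2240) x := by
  obtain ⟨hx0, hx1⟩ := hx
  have hpow (n : ℕ) : x ^ n ≤ 1 := pow_le_one₀ (by linarith) hx1.le
  -- `π` enters with coefficient `x¹¹ - (2 + s)/2 ≤ 0`, so it may be replaced by the larger `p`.
  -- Then both sides agree at `s = 0`, and `1 + x` times their difference is `s` times a positive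
  -- term.
  have hs1 : s ≤ 313 / 1000 := by nlinarith
  set p : ℝ := 3141593 / 1000000
  have hpi : π < p := by have := pi_lt_d6; norm_num at this ⊢; linarith
  set c : ℝ := -5924779 / 3000000 + 3075221 * x / 3000000
      - 924779 * x ^ 2 / 3000000 - 924779 * x ^ 3 / 3000000 - 141593 * x ^ 4 / 1000000
      - 374779 * x ^ 5 / 3000000 - 374779 * x ^ 6 / 3000000 - 2348453 * x ^ 7 / 21000000
      - 2348453 * x ^ 8 / 21000000 - 356513 * x ^ 9 / 3500000 - 356513 * x ^ 10 / 3500000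
  have hc : -1023311207 / 420000000 ≤ c := by
    simp only [c]
    linarith [hpow 2, hpow 3, hpow 4, hpow 5, hpow 6, hpow 7, hpow 8, hpow 9, hpow 10]
  have hpos : 0 < s * c + (1 + x) * (858407 / 2000000 + (1 - x ^ 2) / 3) := by
    nlinarith [mul_nonneg hs.le (show 0 ≤ c + 1023311207 / 420000000 by linarith)]
  have hfactor :
      (1 + x) * (3 * x + shaferTail (p - 6809 / 2240) x - (p / 2 - s - s ^ 3 / 6) * (2 + s))
      = s * (s * c + (1 + x) * (858407 / 2000000 + (1 - x ^ 2) / 3)) := by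
    unfold shaferTail
    linear_combination ((1 + x) * (1 + s / 3 + (s ^ 2 + 1 - x ^ 2) / 6) - c) * hs2
  have hp : 0 < 3 * x + shaferTail (p - 6809 / 2240) x - (p / 2 - s - s ^ 3 / 6) * (2 + s) :=
    pos_of_mul_pos_right (hfactor ▸ mul_pos hs hpos) (by linarith)
  have hmono : 0 ≤ (p - π) * ((2 + s) / 2 - x ^ 11) :=
    mul_nonneg (by linarith) (by linarith [hpow 11])
  unfold shaferTail at hp ⊢
  linear_combination hp + hmono

lemma arcsin_lt_shaferApprox_pi {x : ℝ} (hx : x ∈ Ioo 0 1) :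
    arcsin x < shaferApprox (π - 6809 / 2240) x := by
  rcases le_or_gt x (19 / 20) with hx' | hx'
  · have ha : 713019 / 7000000 ≤ π - 6809 / 2240 := by
      have := pi_gt_d6
      norm_num at this ⊢
      linarith
    exact arcsin_lt_shaferApprox hx fun t ht s hs hs2 =>
      (shaferNum_antitone hs ha).trans_lt (shaferNum_neg_of_le ⟨ht.1, ht.2.le.trans hx'⟩ hs hs2)
  · have hs := sqrt_one_sub_sq_pos (Ioo_subset_Ioo_left (by norm_num) hx)
    have hs1 : √(1 - x ^ 2) < 1 := (sqrt_lt' one_pos).2 (by nlinarith [hx.1])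
    calc arcsin x = π / 2 - arcsin √(1 - x ^ 2) := by
          rw [← arccos_eq_arcsin hx.1.le, arccos_eq_pi_div_two_sub_arcsin]; ring
      _ < π / 2 - √(1 - x ^ 2) - √(1 - x ^ 2) ^ 3 / 6 := by
          linarith [add_cube_div_six_lt_arcsin ⟨hs, hs1⟩]
      _ < shaferApprox (π - 6809 / 2240) x := by
          rw [shaferApprox, lt_div_iff₀ (by positivity)]
          exact pi_div_two_sub_mul_lt_of_near_one ⟨hx'.le, hx.2⟩ hs
            (sq_sqrt (by nlinarith [hx.2]))

theorem shaferE_n5 (x : ℝ) (hx : x ∈ Set.Ioo (0 : ℝ) 1) :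
    (x ^ 5 / 60 + 11 * x ^ 7 / 840 + 67 * x ^ 9 / 6720 + 3461 * x ^ 11 / 443520)
        / (2 + Real.sqrt (1 - x ^ 2))
      < Real.arcsin x - 3 * x / (2 + Real.sqrt (1 - x ^ 2)) ∧
    Real.arcsin x - 3 * x / (2 + Real.sqrt (1 - x ^ 2))
      < (x ^ 5 / 60 + 11 * x ^ 7 / 840 + 67 * x ^ 9 / 6720 + (π - 6809 / 2240) * x ^ 11)
        / (2 + Real.sqrt (1 - x ^ 2)) := by
  have hlower := shaferApprox_lt_arcsin hx fun t ht _ _ hs2 =>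
    shaferNum_pos_of_le_one ⟨ht.1, (ht.2.trans hx.2).le⟩ hs2
  have hupper := arcsin_lt_shaferApprox_pi hx
  rw [shaferApprox, add_div] at hlower hupper
  rw [mul_div_right_comm (3461 : ℝ)]
  unfold shaferTail at hlower hupper
  constructor <;> linarith
end
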